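/- For every finite set P ⊆ U and every finite set Q ⊆ U, the sum over all tiles f of QT(P) of the cardinalities |Q ∩ f| equals |Q|; in particular, the total size of the conflict lists of the tiles of QT(P) with respect to Q is exactly |Q|. -/

import Mathlib

/-!
The tiles of `QT(P)` partition `U`, so every point of `Q ⊆ U` is counted exactly once.

The key fact is that a critical square `σ` is the smallest canonical square containing `P ∩ σ`.
Disjointness: if a tile of a quadrant `q` of a critical `σ` contains `x`, then every critical
square `τ ∋ x` contains `σ`; otherwise `τ ⊆ q`, so `τ ⊆ sq(P ∩ q)` and the tile `q \ sq(P ∩ q)`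
misses `x`. So the tile containing `x` is determined by the smallest critical square around `x`.
Covering: descend from `sq(P)` along the quadrants containing `x`; each passage from a critical
`σ` to `sq(P ∩ q)` loses the points of `P ∩ σ` outside `q`, so the descent ends in a tile.
-/

/-- The unit square `U = [0,1) × [0,1)`. -/
def unitSq : Set (ℝ × ℝ) := Set.Ico (0 : ℝ) 1 ×ˢ Set.Ico (0 : ℝ) 1

/-- The square `[i/2^k, (i+1)/2^k) × [j/2^k, (j+1)/2^k)`. -/
def canSq (k : ℕ) (i j : ℤ) : Set (ℝ × ℝ) :=
  Set.Ico ((i : ℝ) / 2 ^ k) (((i : ℝ) + 1) / 2 ^ k) ×ˢ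
    Set.Ico ((j : ℝ) / 2 ^ k) (((j : ℝ) + 1) / 2 ^ k)

/-- `σ` is a canonical square of side length `2⁻ᵏ`: it has the form
`[i/2^k, (i+1)/2^k) × [j/2^k, (j+1)/2^k)` with `0 ≤ i, j < 2^k`
(so it is contained in the unit square). -/
def IsCanSqSide (k : ℕ) (σ : Set (ℝ × ℝ)) : Prop :=
  ∃ i j : ℤ, 0 ≤ i ∧ i < 2 ^ k ∧ 0 ≤ j ∧ j < 2 ^ k ∧ σ = canSq k i j

/-- `σ` is a canonical square. -/
def IsCanSq (σ : Set (ℝ × ℝ)) : Prop := ∃ k : ℕ, IsCanSqSide k σ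

/-- `q` is one of the four quadrants of the canonical square `σ`: if `σ` has side
length `2⁻ᵏ`, the quadrants are the canonical squares of side length `2⁻⁽ᵏ⁺¹⁾`
contained in `σ`. -/
def IsQuadrantOf (q σ : Set (ℝ × ℝ)) : Prop :=
  ∃ k : ℕ, IsCanSqSide k σ ∧ IsCanSqSide (k + 1) q ∧ q ⊆ σ

/-- `σ` is the smallest canonical square containing `S`: it is a canonical square,
it contains `S`, and it is contained in every canonical square containing `S`. -/
def IsSmallestCanSq (S σ : Set (ℝ × ℝ)) : Prop :=
  IsCanSq σ ∧ S ⊆ σ ∧ ∀ τ : Set (ℝ × ℝ), IsCanSq τ → S ⊆ τ → σ ⊆ τ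

open scoped Classical

/-- `smallestCanSq S`: the smallest canonical square containing `S` (junk value `∅` if none exists). -/
noncomputable def smallestCanSq (S : Set (ℝ × ℝ)) : Set (ℝ × ℝ) :=
  if h : ∃ σ : Set (ℝ × ℝ), IsSmallestCanSq S σ then h.choose else ∅

/-- A canonical square `σ` is critical for `P` if at least two of its four
quadrants contain a point of `P`. -/
def Critical (P σ : Set (ℝ × ℝ)) : Prop :=
  IsCanSq σ ∧ ∃ q₁ q₂ : Set (ℝ × ℝ), IsQuadrantOf q₁ σ ∧ IsQuadrantOf q₂ σ ∧
    q₁ ≠ q₂ ∧ (P ∩ q₁).Nonempty ∧ (P ∩ q₂).Nonempty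

/-- The tiles of the compressed quadtree map `QT(P)`: (i) `U` itself if `|P| ≤ 1`;
(ii) the annulus `U \ sq(P)` if `|P| ≥ 2` and `sq(P) ≠ U`; (iii) for every
canonical square `σ` critical for `P` and every quadrant `q` of `σ`: the square
`q` if `|P ∩ q| ≤ 1`, and the annulus `q \ sq(P ∩ q)` if `|P ∩ q| ≥ 2` and
`sq(P ∩ q) ≠ q`. -/
noncomputable def QT (P : Set (ℝ × ℝ)) : Set (Set (ℝ × ℝ)) :=
  {f | (P.ncard ≤ 1 ∧ f = unitSq)
    ∨ (2 ≤ P.ncard ∧ smallestCanSq P ≠ unitSq ∧ f = unitSq \ smallestCanSq P)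
    ∨ (∃ σ q : Set (ℝ × ℝ), Critical P σ ∧ IsQuadrantOf q σ ∧
        (((P ∩ q).ncard ≤ 1 ∧ f = q)
          ∨ (2 ≤ (P ∩ q).ncard ∧ smallestCanSq (P ∩ q) ≠ q ∧ f = q \ smallestCanSq (P ∩ q))))}

open Set

theorem finsum_mem_ncard_inter_eq_ncard {α : Type*} {T : Set (Set α)} {Q : Set α}
    (hQ : Q.Finite) (hT : T.PairwiseDisjoint id) (hQT : Q ⊆ ⋃₀ T) :
    ∑ᶠ f ∈ T, (Q ∩ f).ncard = Q.ncard := by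
  set T' := {f ∈ T | (Q ∩ f).Nonempty}
  have hinj : T'.InjOn (Q ∩ ·) := fun f₁ h₁ f₂ h₂ he =>
    hT.elim h₁.1 h₂.1 (not_disjoint_iff.2 <| by
      obtain ⟨x, hxQ, hx₁⟩ := h₁.2
      exact ⟨x, hx₁, (he.subset ⟨hxQ, hx₁⟩).2⟩)
  have hT' : T'.Finite := Finite.of_finite_image
    (hQ.finite_subsets.subset (image_subset_iff.2 fun _ _ => inter_subset_left)) hinj
  have hsupp : T ∩ Function.support (fun f => (Q ∩ f).ncard) = T' := by
    ext f
    simp [T', ncard_eq_zero (hQ.inter_of_left f), nonempty_iff_ne_empty]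
  have hQ' : ⋃ f ∈ T', Q ∩ f = Q := by
    refine subset_antisymm (iUnion₂_subset fun _ _ => inter_subset_left) fun x hx => ?_
    obtain ⟨f, hf, hxf⟩ := hQT hx
    exact mem_biUnion (x := f) ⟨hf, x, hx, hxf⟩ ⟨hx, hxf⟩
  rw [← finsum_mem_inter_support, hsupp, ← hT'.ncard_biUnion (fun f _ => hQ.inter_of_left f)
    ((hT.subset (sep_subset T _)).mono_on fun _ _ => inter_subset_right), hQ']

noncomputable def canSqAt (k : ℕ) (x : ℝ × ℝ) : Set (ℝ × ℝ) :=
  canSq k ⌊x.1 * 2 ^ k⌋ ⌊x.2 * 2 ^ k⌋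

section CanonicalSquares

variable {k k' : ℕ} {i j : ℤ} {σ τ : Set (ℝ × ℝ)} {x y : ℝ × ℝ}

theorem mem_canSq_iff : x ∈ canSq k i j ↔ ⌊x.1 * 2 ^ k⌋ = i ∧ ⌊x.2 * 2 ^ k⌋ = j := by
  have h : (0 : ℝ) < 2 ^ k := by positivity
  simp only [canSq, mem_prod, mem_Ico, div_le_iff₀ h, lt_div_iff₀ h, Int.floor_eq_iff]

theorem mem_canSqAt_iff :
    y ∈ canSqAt k x ↔ ⌊y.1 * 2 ^ k⌋ = ⌊x.1 * 2 ^ k⌋ ∧ ⌊y.2 * 2 ^ k⌋ = ⌊x.2 * 2 ^ k⌋ :=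
  mem_canSq_iff

theorem mem_canSqAt_self : x ∈ canSqAt k x := mem_canSqAt_iff.2 ⟨rfl, rfl⟩

theorem IsCanSqSide.eq_canSqAt (hσ : IsCanSqSide k σ) (hx : x ∈ σ) : σ = canSqAt k x := by
  obtain ⟨i, j, -, -, -, -, rfl⟩ := hσ
  obtain ⟨rfl, rfl⟩ := mem_canSq_iff.1 hx
  rfl

theorem IsCanSqSide.eq_of_mem (hσ : IsCanSqSide k σ) (hτ : IsCanSqSide k τ) (hxσ : x ∈ σ)
    (hxτ : x ∈ τ) : σ = τ :=
  (hσ.eq_canSqAt hxσ).trans (hτ.eq_canSqAt hxτ).symm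

theorem floor_mul_two_pow_eq_div (m : ℕ) (a : ℝ) : ⌊a * 2 ^ k⌋ = ⌊a * 2 ^ (k + m)⌋ / 2 ^ m := by
  have h := Int.floor_div_natCast (a * 2 ^ (k + m)) (2 ^ m)
  push_cast at h
  rw [← h, pow_add, mul_div_assoc, mul_div_cancel_right₀ _ (by positivity)]

theorem canSqAt_antitone (hk : k ≤ k') (x : ℝ × ℝ) : canSqAt k' x ⊆ canSqAt k x := by
  obtain ⟨m, rfl⟩ := Nat.exists_eq_add_of_le hk
  intro y hy
  rw [mem_canSqAt_iff] at hy ⊢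
  rw [floor_mul_two_pow_eq_div m y.1, floor_mul_two_pow_eq_div m y.2, hy.1, hy.2,
    ← floor_mul_two_pow_eq_div, ← floor_mul_two_pow_eq_div]
  exact ⟨rfl, rfl⟩

theorem isCanSqSide_canSqAt (hx : x ∈ unitSq) : IsCanSqSide k (canSqAt k x) := by
  obtain ⟨⟨hx₁, hx₁'⟩, hx₂, hx₂'⟩ := hx
  have h : (0 : ℝ) < 2 ^ k := by positivity
  refine ⟨_, _, ?_, ?_, ?_, ?_, rfl⟩
  all_goals first
    | exact Int.floor_nonneg.2 (by positivity)
    | exact Int.floor_lt.2 (by push_cast; nlinarith)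

theorem unitSq_eq_canSq : unitSq = canSq 0 0 0 := by
  simp [unitSq, canSq]

theorem canSqAt_zero (hx : x ∈ unitSq) : canSqAt 0 x = unitSq :=
  ((isCanSqSide_canSqAt hx).eq_of_mem ⟨0, 0, le_rfl, one_pos, le_rfl, one_pos, unitSq_eq_canSq⟩
    mem_canSqAt_self hx)

theorem IsCanSqSide.subset_unitSq (hσ : IsCanSqSide k σ) : σ ⊆ unitSq := by
  obtain ⟨i, j, hi, hik, hj, hjk, rfl⟩ := hσ
  intro x hx
  obtain ⟨rfl, rfl⟩ := mem_canSq_iff.1 hx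
  have h : (0 : ℝ) < 2 ^ k := by positivity
  rw [Int.floor_nonneg] at hi hj
  rw [Int.floor_lt] at hik hjk
  push_cast at hik hjk
  refine ⟨⟨?_, ?_⟩, ?_, ?_⟩ <;> nlinarith

theorem IsCanSqSide.level_eq (hk : IsCanSqSide k σ) (hk' : IsCanSqSide k' σ) : k = k' := by
  obtain ⟨i, j, -, -, -, -, rfl⟩ := hk
  obtain ⟨i', j', -, -, -, -, he⟩ := hk'
  have hlt : ∀ (n : ℕ) (a : ℝ), a / 2 ^ n < (a + 1) / 2 ^ n := fun n a =>
    div_lt_div_of_pos_right (lt_add_one a) (by positivity)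
  rw [canSq, canSq, prod_eq_prod_iff_of_nonempty (by simp [hlt]), Ico_eq_Ico_iff (.inl (hlt _ _)),
    Ico_eq_Ico_iff (.inl (hlt _ _))] at he
  have h := congrArg₂ (· - ·) he.1.2 he.1.1
  simp only [add_div, add_sub_cancel_left] at h
  rw [one_div, one_div, inv_inj] at h
  exact Nat.pow_right_injective le_rfl (by exact_mod_cast h)

theorem IsCanSqSide.subset_of_le (hσ : IsCanSqSide k σ) (hτ : IsCanSqSide k' τ) (hk : k ≤ k')
    (hxσ : x ∈ σ) (hxτ : x ∈ τ) : τ ⊆ σ := by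
  rw [hσ.eq_canSqAt hxσ, hτ.eq_canSqAt hxτ]
  exact canSqAt_antitone hk x

theorem IsCanSqSide.isQuadrantOf_canSqAt (hσ : IsCanSqSide k σ) (hx : x ∈ σ) :
    IsQuadrantOf (canSqAt (k + 1) x) σ :=
  ⟨k, hσ, isCanSqSide_canSqAt (hσ.subset_unitSq hx),
    hσ.eq_canSqAt hx ▸ canSqAt_antitone k.le_succ x⟩

theorem IsQuadrantOf.subset {q : Set (ℝ × ℝ)} (hq : IsQuadrantOf q σ) : q ⊆ σ := by
  obtain ⟨k, -, -, h⟩ := hq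
  exact h

theorem IsQuadrantOf.ne {q : Set (ℝ × ℝ)} (hq : IsQuadrantOf q σ) : q ≠ σ := by
  obtain ⟨k, hσ, hq, -⟩ := hq
  rintro rfl
  exact absurd (hσ.level_eq hq) k.succ_ne_self.symm

theorem IsQuadrantOf.eq_of_mem {q q' : Set (ℝ × ℝ)} (hq : IsQuadrantOf q σ)
    (hq' : IsQuadrantOf q' σ) (hx : x ∈ q) (hx' : x ∈ q') : q = q' := by
  obtain ⟨k, hσ, hq, -⟩ := hq
  obtain ⟨k', hσ', hq', -⟩ := hq'
  obtain rfl := hσ.level_eq hσ'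
  exact hq.eq_of_mem hq' hx hx'

theorem exists_floor_mul_two_pow_ne {a b : ℝ} (hab : a ≠ b) :
    ∃ K : ℕ, ⌊b * 2 ^ K⌋ ≠ ⌊a * 2 ^ K⌋ := by
  have hpos : 0 < |b - a| := abs_pos.2 (sub_ne_zero.2 hab.symm)
  obtain ⟨K, hK⟩ := pow_unbounded_of_one_lt |b - a|⁻¹ one_lt_two
  refine ⟨K, fun h => ?_⟩
  have h1 := Int.abs_sub_lt_one_of_floor_eq_floor h
  rw [← sub_mul, abs_mul, abs_of_pos (by positivity : (0 : ℝ) < 2 ^ K)] at h1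
  rw [inv_lt_iff_one_lt_mul₀ hpos] at hK
  linarith

theorem exists_notMem_canSqAt (hxy : x ≠ y) : ∃ K, y ∉ canSqAt K x := by
  by_cases h₁ : x.1 = y.1
  · obtain ⟨K, hK⟩ := exists_floor_mul_two_pow_ne fun h₂ => hxy (Prod.ext h₁ h₂)
    exact ⟨K, fun hy => hK (mem_canSqAt_iff.1 hy).2⟩
  · obtain ⟨K, hK⟩ := exists_floor_mul_two_pow_ne h₁
    exact ⟨K, fun hy => hK (mem_canSqAt_iff.1 hy).1⟩

end CanonicalSquares

section SmallestCanonicalSquare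

variable {S : Set (ℝ × ℝ)}

theorem exists_isSmallestCanSq (hSU : S ⊆ unitSq) (hS : S.Nontrivial) :
    ∃ σ, IsSmallestCanSq S σ := by
  obtain ⟨p, hp, q, hq, hpq⟩ := hS
  obtain ⟨K, hK⟩ := exists_notMem_canSqAt hpq
  have hbound : ∀ k, S ⊆ canSqAt k p → k ≤ K := fun k hk =>
    le_of_not_ge fun hKk => hK (canSqAt_antitone hKk p (hk hq))
  have h0 : S ⊆ canSqAt 0 p := canSqAt_zero (hSU hp) ▸ hSU
  set k₀ := Nat.findGreatest (fun k => S ⊆ canSqAt k p) K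
  refine ⟨canSqAt k₀ p, ⟨k₀, isCanSqSide_canSqAt (hSU hp)⟩,
    Nat.findGreatest_spec (P := fun k => S ⊆ canSqAt k p) (Nat.zero_le K) h0, ?_⟩
  rintro τ ⟨m, hτ⟩ hSτ
  obtain rfl := hτ.eq_canSqAt (hSτ hp)
  exact canSqAt_antitone (Nat.le_findGreatest (hbound m hSτ) hSτ) p

theorem isSmallestCanSq_smallestCanSq (hSU : S ⊆ unitSq) (hS : S.Nontrivial) :
    IsSmallestCanSq S (smallestCanSq S) := by
  have h := exists_isSmallestCanSq hSU hS
  rw [smallestCanSq, dif_pos h]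
  exact h.choose_spec

end SmallestCanonicalSquare

section Critical

variable {P σ : Set (ℝ × ℝ)}

theorem Critical.nontrivial (h : Critical P σ) : (P ∩ σ).Nontrivial := by
  obtain ⟨-, q₁, q₂, hq₁, hq₂, hne, ⟨p₁, hp₁, hpq₁⟩, ⟨p₂, hp₂, hpq₂⟩⟩ := h
  refine ⟨p₁, ⟨hp₁, hq₁.subset hpq₁⟩, p₂, ⟨hp₂, hq₂.subset hpq₂⟩, ?_⟩
  rintro rfl
  exact hne (hq₁.eq_of_mem hq₂ hpq₁ hpq₂)

theorem Critical.exists_mem_notMem {q : Set (ℝ × ℝ)} (h : Critical P σ)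
    (hq : IsQuadrantOf q σ) : ∃ p ∈ P ∩ σ, p ∉ q := by
  obtain ⟨-, q₁, q₂, hq₁, hq₂, hne, ⟨p₁, hp₁, hpq₁⟩, ⟨p₂, hp₂, hpq₂⟩⟩ := h
  by_contra! hall
  exact hne ((hq₁.eq_of_mem hq hpq₁ (hall p₁ ⟨hp₁, hq₁.subset hpq₁⟩)).trans
    (hq.eq_of_mem hq₂ (hall p₂ ⟨hp₂, hq₂.subset hpq₂⟩) hpq₂))

theorem Critical.isSmallestCanSq (h : Critical P σ) : IsSmallestCanSq (P ∩ σ) σ := by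
  obtain ⟨k, hσ⟩ := h.1
  refine ⟨⟨k, hσ⟩, inter_subset_right, ?_⟩
  rintro τ ⟨m, hτ⟩ hPτ
  obtain ⟨p, hp⟩ := h.nontrivial.nonempty
  rcases le_or_gt m k with hmk | hkm
  · exact hτ.subset_of_le hσ hmk (hPτ hp) hp.2
  · obtain ⟨r, hr, hrq⟩ := h.exists_mem_notMem (hσ.isQuadrantOf_canSqAt hp.2)
    have hτq : τ ⊆ canSqAt (k + 1) p :=
      (isCanSqSide_canSqAt (hσ.subset_unitSq hp.2)).subset_of_le hτ hkm mem_canSqAt_self (hPτ hp)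
    exact absurd (hτq (hPτ hr)) hrq

theorem IsSmallestCanSq.critical {S : Set (ℝ × ℝ)} (hσ : IsSmallestCanSq S σ) (hSP : S ⊆ P)
    (hS : S.Nonempty) : Critical P σ := by
  obtain ⟨⟨k, hσk⟩, hSσ, hmin⟩ := hσ
  obtain ⟨p, hp⟩ := hS
  have hq := hσk.isQuadrantOf_canSqAt (hSσ hp)
  obtain ⟨r, hr, hrq⟩ : ∃ r ∈ S, r ∉ canSqAt (k + 1) p := by
    by_contra! hall
    exact hq.ne (subset_antisymm hq.subset
      (hmin _ ⟨k + 1, isCanSqSide_canSqAt (hσk.subset_unitSq (hSσ hp))⟩ hall))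
  exact ⟨⟨k, hσk⟩, _, _, hq, hσk.isQuadrantOf_canSqAt (hSσ hr),
    fun he => hrq (he ▸ mem_canSqAt_self), ⟨p, hSP hp, mem_canSqAt_self⟩,
    ⟨r, hSP hr, mem_canSqAt_self⟩⟩

theorem Critical.subset_smallestCanSq (hPU : P ⊆ unitSq) (h : Critical P σ) :
    σ ⊆ smallestCanSq P :=
  have hP := isSmallestCanSq_smallestCanSq hPU (h.nontrivial.mono inter_subset_left)
  h.isSmallestCanSq.2.2 _ hP.1 (inter_subset_left.trans hP.2.1)

end Critical

/-- Clause (iii) of `QT`: the tile contributed by a quadrant `q` of a critical square. -/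
def IsQuadTile (P q f : Set (ℝ × ℝ)) : Prop :=
  ((P ∩ q).ncard ≤ 1 ∧ f = q) ∨
    (2 ≤ (P ∩ q).ncard ∧ smallestCanSq (P ∩ q) ≠ q ∧ f = q \ smallestCanSq (P ∩ q))

theorem mem_QT_iff {P f : Set (ℝ × ℝ)} :
    f ∈ QT P ↔ (P.ncard ≤ 1 ∧ f = unitSq) ∨
      (2 ≤ P.ncard ∧ smallestCanSq P ≠ unitSq ∧ f = unitSq \ smallestCanSq P) ∨
      ∃ σ q, Critical P σ ∧ IsQuadrantOf q σ ∧ IsQuadTile P q f :=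
  Iff.rfl

section Tiles

variable {P σ τ q f f' : Set (ℝ × ℝ)} {x : ℝ × ℝ}

theorem IsQuadTile.subset (hf : IsQuadTile P q f) : f ⊆ q := by
  rcases hf with ⟨-, rfl⟩ | ⟨-, -, rfl⟩
  exacts [subset_rfl, sdiff_subset]

theorem IsQuadTile.eq (hf : IsQuadTile P q f) (hf' : IsQuadTile P q f') : f = f' := by
  rcases hf with ⟨h, rfl⟩ | ⟨h, -, rfl⟩ <;> rcases hf' with ⟨h', rfl⟩ | ⟨h', -, rfl⟩ <;>
    first | rfl | omega

theorem IsQuadTile.notMem_of_critical (hPfin : P.Finite) (hPU : P ⊆ unitSq)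
    (hf : IsQuadTile P q f) (hτ : Critical P τ) (hτq : τ ⊆ q) (hx : x ∈ τ) : x ∉ f := by
  have hPτq : P ∩ τ ⊆ P ∩ q := inter_subset_inter_right P hτq
  have hPq : (P ∩ q).Nontrivial := hτ.nontrivial.mono hPτq
  rcases hf with ⟨hle, -⟩ | ⟨-, -, rfl⟩
  · exact absurd (one_lt_ncard_iff_nontrivial_and_finite.2 ⟨hPq, hPfin.inter_of_left q⟩)
      hle.not_gt
  · have hs := isSmallestCanSq_smallestCanSq (inter_subset_left.trans hPU) hPq
    exact fun hxf => hxf.2 (hτ.isSmallestCanSq.2.2 _ hs.1 (hPτq.trans hs.2.1) hx)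

theorem IsQuadTile.subset_of_critical (hPfin : P.Finite) (hPU : P ⊆ unitSq)
    (hq : IsQuadrantOf q σ) (hf : IsQuadTile P q f) (hxf : x ∈ f) (hτ : Critical P τ)
    (hxτ : x ∈ τ) : σ ⊆ τ := by
  obtain ⟨k, hσk, hqk, hqσ⟩ := hq
  obtain ⟨m, hτm⟩ := hτ.1
  have hxq := hf.subset hxf
  rcases le_or_gt m k with hmk | hkm
  · exact hτm.subset_of_le hσk hmk hxτ (hqσ hxq)
  · exact absurd hxf (hf.notMem_of_critical hPfin hPU hτ (hqk.subset_of_le hτm hkm hxq hxτ) hxτ)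

theorem IsQuadTile.eq_of_mem (hPfin : P.Finite) (hPU : P ⊆ unitSq) {σ' q' : Set (ℝ × ℝ)}
    (hσ : Critical P σ) (hq : IsQuadrantOf q σ) (hf : IsQuadTile P q f) (hxf : x ∈ f)
    (hσ' : Critical P σ') (hq' : IsQuadrantOf q' σ') (hf' : IsQuadTile P q' f')
    (hxf' : x ∈ f') : f = f' := by
  obtain rfl : σ = σ' := subset_antisymm
    (hf.subset_of_critical hPfin hPU hq hxf hσ' (hq'.subset (hf'.subset hxf')))
    (hf'.subset_of_critical hPfin hPU hq' hxf' hσ (hq.subset (hf.subset hxf)))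
  obtain rfl := hq.eq_of_mem hq' (hf.subset hxf) (hf'.subset hxf')
  exact hf.eq hf'

theorem QT_subset_singleton_of_ncard_le_one (hPfin : P.Finite) (hP : P.ncard ≤ 1) :
    QT P ⊆ {unitSq} := by
  rintro f (⟨-, rfl⟩ | ⟨h, -⟩ | ⟨σ, q, hσ, -⟩)
  · rfl
  · omega
  · exact absurd (one_lt_ncard_iff_nontrivial_and_finite.2
      ⟨hσ.nontrivial.mono inter_subset_left, hPfin⟩) hP.not_gt

theorem QT_pairwiseDisjoint (hPfin : P.Finite) (hPU : P ⊆ unitSq) :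
    (QT P).PairwiseDisjoint id := by
  by_cases hP : P.ncard ≤ 1
  · exact (pairwiseDisjoint_singleton _ _).subset (QT_subset_singleton_of_ncard_le_one hPfin hP)
  have hannulus : ∀ {f}, (∃ σ q, Critical P σ ∧ IsQuadrantOf q σ ∧ IsQuadTile P q f) →
      Disjoint (unitSq \ smallestCanSq P) f := by
    rintro f ⟨σ, q, hσ, hq, hf⟩
    exact disjoint_sdiff_left.mono_right
      (hf.subset.trans (hq.subset.trans (hσ.subset_smallestCanSq hPU)))
  intro f₁ hf₁ f₂ hf₂ hne
  simp only [mem_QT_iff, hP, false_and, false_or] at hf₁ hf₂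
  rcases hf₁ with ⟨-, -, rfl⟩ | hf₁ <;> rcases hf₂ with ⟨-, -, rfl⟩ | hf₂
  · exact absurd rfl hne
  · exact hannulus hf₂
  · exact (hannulus hf₁).symm
  · obtain ⟨σ₁, q₁, hσ₁, hq₁, hf₁⟩ := hf₁
    obtain ⟨σ₂, q₂, hσ₂, hq₂, hf₂⟩ := hf₂
    exact disjoint_left.2 fun x hx₁ hx₂ =>
      hne (hf₁.eq_of_mem hPfin hPU hσ₁ hq₁ hx₁ hσ₂ hq₂ hf₂ hx₂)

theorem exists_mem_QT_of_critical (hPfin : P.Finite) (hPU : P ⊆ unitSq) (hσ : Critical P σ)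
    (hx : x ∈ σ) : ∃ f ∈ QT P, x ∈ f := by
  induction hn : (P ∩ σ).ncard using Nat.strong_induction_on generalizing σ with
  | _ n ih =>
  obtain ⟨k, hσk⟩ := hσ.1
  set q := canSqAt (k + 1) x
  have hq : IsQuadrantOf q σ := hσk.isQuadrantOf_canSqAt hx
  by_cases hcard : (P ∩ q).ncard ≤ 1
  · exact ⟨q, Or.inr (Or.inr ⟨σ, q, hσ, hq, Or.inl ⟨hcard, rfl⟩⟩), mem_canSqAt_self⟩
  have hPq : (P ∩ q).Nontrivial :=
    (one_lt_ncard_iff_nontrivial_and_finite.1 (not_le.1 hcard)).1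
  set s := smallestCanSq (P ∩ q)
  have hs : IsSmallestCanSq (P ∩ q) s :=
    isSmallestCanSq_smallestCanSq (inter_subset_left.trans hPU) hPq
  have hsq : s ⊆ q :=
    hs.2.2 q ⟨k + 1, isCanSqSide_canSqAt (hσk.subset_unitSq hx)⟩ inter_subset_right
  by_cases hxs : x ∈ s
  · obtain ⟨p, hp, hpq⟩ := hσ.exists_mem_notMem hq
    have hlt : (P ∩ s).ncard < n := hn ▸ ncard_lt_ncard
      ((ssubset_iff_of_subset (inter_subset_inter_right P (hsq.trans hq.subset))).2
        ⟨p, hp, fun hp' => hpq (hsq hp'.2)⟩) (hPfin.inter_of_left σ)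
    exact ih _ hlt (hs.critical inter_subset_left hPq.nonempty) hxs rfl
  · exact ⟨q \ s, Or.inr (Or.inr ⟨σ, q, hσ, hq, Or.inr ⟨not_le.1 hcard,
      fun h : s = q => hxs (h ▸ mem_canSqAt_self), rfl⟩⟩), mem_canSqAt_self, hxs⟩

theorem unitSq_subset_sUnion_QT (hPfin : P.Finite) (hPU : P ⊆ unitSq) : unitSq ⊆ ⋃₀ QT P := by
  intro x hx
  by_cases hP : P.ncard ≤ 1
  · exact ⟨unitSq, Or.inl ⟨hP, rfl⟩, hx⟩
  have hPnt : P.Nontrivial := (one_lt_ncard_iff_nontrivial_and_finite.1 (not_le.1 hP)).1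
  have hs := isSmallestCanSq_smallestCanSq hPU hPnt
  by_cases hxs : x ∈ smallestCanSq P
  · exact exists_mem_QT_of_critical hPfin hPU (hs.critical subset_rfl hPnt.nonempty) hxs
  · exact ⟨_, Or.inr (Or.inl ⟨not_le.1 hP, fun h => hxs (h ▸ hx), rfl⟩), hx, hxs⟩

end Tiles

/-- The sum over all tiles `f ∈ QT(P)` of `|Q ∩ f|` equals `|Q|`: the total size
of the conflict lists of the tiles of `QT(P)` with respect to `Q` is exactly `|Q|`. -/
theorem QT_conflict_lists_total (P Q : Set (ℝ × ℝ))
    (hPfin : P.Finite) (hPU : P ⊆ unitSq)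
    (hQfin : Q.Finite) (hQU : Q ⊆ unitSq) :
    ∑ᶠ f ∈ QT P, (Q ∩ f).ncard = Q.ncard :=
  finsum_mem_ncard_inter_eq_ncard hQfin (QT_pairwiseDisjoint hPfin hPU)
    (hQU.trans (unitSq_subset_sUnion_QT hPfin hPU))
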